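/- arXiv:2108.05056 — 3 statements merged into one kernel-verified Lean document; each statement's English description precedes it below -/
import Mathlib

section
/- Let R be a finite commutative ring, G a finite group of order n with a fixed listing g_1,…,g_n, and v ∈ RG. Then Ψ(R(I(v))^T) = C(v)^⊥; that is, the image under Ψ of the set of transposes of elements of the right annihilator of I(v) equals the dual code of C(v). -/
open MonoidAlgebra Matrix

section Defs

variable {R : Type} [CommRing R] {G : Type} [Group G] {n : ℕ}

/-- The matrix `σ(v)` given a listing `g : Fin n ≃ G`: `σ(v)_{ij} = α_{g_i⁻¹ g_j}`. -/
def sigmaMat (g : Fin n ≃ G) (v : MonoidAlgebra R G) : Matrix (Fin n) (Fin n) R :=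
  fun i j => v.coeff ((g i)⁻¹ * g j)

/-- The code `C(v)`: the row span of `σ(v)`. -/
def codeOf (g : Fin n ≃ G) (v : MonoidAlgebra R G) : Submodule R (Fin n → R) :=
  Submodule.span R (Set.range (sigmaMat g v))

/-- The canonical map `Ψ : RG → Rⁿ`. -/
def Psi (g : Fin n ≃ G) (v : MonoidAlgebra R G) : Fin n → R := fun i => v.coeff (g i)

/-- The canonical involution `v ↦ vᵀ`, sending `Σ αᵢ gᵢ` to `Σ αᵢ gᵢ⁻¹`. -/
def transposeElt (v : MonoidAlgebra R G) : MonoidAlgebra R G :=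
  MonoidAlgebra.ofCoeff (Finsupp.equivMapDomain (Equiv.inv G) v.coeff)

/-- The dual code of a set of vectors w.r.t. the standard inner product. -/
def dualCode {m : ℕ} (C : Set (Fin m → R)) : Submodule R (Fin m → R) where
  carrier := {x | ∀ y ∈ C, ∑ i, x i * y i = 0}
  add_mem' := by
    intro a b ha hb y hy
    have h : ∑ i, (a + b) i * y i = (∑ i, a i * y i) + ∑ i, b i * y i := by
      rw [← Finset.sum_add_distrib]
      simp [add_mul]
    rw [h, ha y hy, hb y hy, add_zero]
  zero_mem' := by intro y hy; simp
  smul_mem' := by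
    intro c x hx y hy
    have h : ∑ i, (c • x) i * y i = c * ∑ i, x i * y i := by
      rw [Finset.mul_sum]
      simp [mul_assoc]
    rw [h, hx y hy, mul_zero]

/-- A set of group-ring elements is a left ideal if it is the underlying set of a
left `RG`-submodule of `RG`. -/
def IsLeftIdeal (S : Set (MonoidAlgebra R G)) : Prop :=
  ∃ I : Submodule (MonoidAlgebra R G) (MonoidAlgebra R G), (I : Set (MonoidAlgebra R G)) = S

/-- The right annihilator of a set in the group ring. -/
def rAnn (S : Set (MonoidAlgebra R G)) : Set (MonoidAlgebra R G) :=
  {w | ∀ u ∈ S, u * w = 0}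

/-- `I(v) = Ψ⁻¹(C(v))` as a set. -/
def Iset (g : Fin n ≃ G) (v : MonoidAlgebra R G) : Set (MonoidAlgebra R G) :=
  Psi g ⁻¹' (codeOf g v : Set (Fin n → R))

end Defs



section Aux
set_option linter.unusedSectionVars false
variable {R : Type} [CommRing R] {G : Type} [Group G] [Fintype G] {n : ℕ}

lemma mul_apply_fin (u w : MonoidAlgebra R G) (x : G) :
    (u * w).coeff x = ∑ a : G, u.coeff a * w.coeff (a⁻¹ * x) := by
  rw [MonoidAlgebra.coeff_mul_apply_left, Finsupp.sum_fintype _ _ (fun a => by simp)]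

lemma transposeElt_apply (w : MonoidAlgebra R G) (a : G) :
    (transposeElt w).coeff a = w.coeff a⁻¹ := rfl

lemma code_translate (g : Fin n ≃ G) (v : MonoidAlgebra R G) (h : G)
    {y : Fin n → R} (hy : y ∈ codeOf g v) :
    (fun i => y (g.symm (h * g i))) ∈ codeOf g v := by
  induction hy using Submodule.span_induction with
  | mem z hz =>
    obtain ⟨k, rfl⟩ := hz
    refine Submodule.subset_span ⟨g.symm (h⁻¹ * g k), ?_⟩
    funext j
    simp [sigmaMat, _root_.mul_inv_rev, mul_assoc]
  | zero => exact zero_mem _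
  | add a b _ _ ha hb => exact add_mem ha hb
  | smul c a _ ha => exact Submodule.smul_mem _ c ha

end Aux

/-- `Ψ(R(I(v))ᵀ) = C(v)^⊥`. -/
theorem psi_image_rAnn_transpose (R : Type) [CommRing R] [Fintype R] (G : Type) [Group G]
    [Fintype G] {n : ℕ} (g : Fin n ≃ G) (v : MonoidAlgebra R G) :
    Psi g '' (transposeElt '' rAnn (Iset g v)) =
      (dualCode (codeOf g v : Set (Fin n → R)) : Set (Fin n → R)) := by
  ext x
  constructor
  · rintro ⟨_, ⟨w, hw, rfl⟩, rfl⟩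
    intro y hy
    set u : MonoidAlgebra R G := MonoidAlgebra.ofCoeff <| Finsupp.equivFunOnFinite.symm (fun a => y (g.symm a)) with hu
    have hPsiu : Psi g u = y := by
      funext i
      simp [Psi, hu]
    have hmem : u ∈ Iset g v := by
      show Psi g u ∈ (codeOf g v : Set (Fin n → R))
      rw [hPsiu]; exact hy
    have h0 : u * w = 0 := hw u hmem
    have h1 : (u * w).coeff 1 = 0 := by rw [h0]; rfl
    rw [mul_apply_fin] at h1
    have heq := Fintype.sum_equiv g (fun i => Psi g (transposeElt w) i * y i)
      (fun a => u.coeff a * w.coeff (a⁻¹ * 1)) (fun i => by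
        simp [Psi, transposeElt_apply, hu, mul_comm])
    rw [heq]; exact h1
  · intro hx
    set u0 : MonoidAlgebra R G := MonoidAlgebra.ofCoeff <| Finsupp.equivFunOnFinite.symm (fun a => x (g.symm a)) with hu0
    refine ⟨transposeElt (transposeElt u0), ⟨transposeElt u0, ?_, rfl⟩, ?_⟩
    · intro u hu
      have hPsiu : Psi g u ∈ (codeOf g v : Set (Fin n → R)) := hu
      ext h
      rw [mul_apply_fin, MonoidAlgebra.coeff_zero, Finsupp.coe_zero, Pi.zero_apply]
      have hy' : (fun i => (Psi g u) (g.symm (h * g i))) ∈ codeOf g v :=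
        code_translate g v h hPsiu
      have hdual := hx _ hy'
      rw [← hdual]
      refine Fintype.sum_equiv ((Equiv.mulLeft h⁻¹).trans g.symm) _ _ ?_
      intro a
      simp only [Equiv.trans_apply, Equiv.coe_mulLeft, Equiv.apply_symm_apply, Psi,
        mul_inv_cancel_left, transposeElt_apply, _root_.mul_inv_rev, inv_inv, hu0]
      simp [mul_comm]
    · funext i
      simp [Psi, transposeElt, hu0]
end

section
/- Let R be a finite commutative ring and G a finite group of order n = 2ℓ. Let H = {e = h_0, h_1, …, h_{ℓ-1}} be a subgroup of index 2 in G and let β ∈ G \ H satisfy β^{-1} = β. List the elements of G as g_1 = e, g_2 = h_1, …, g_ℓ = h_{ℓ-1}, g_{ℓ+1} = β h_{ℓ-1}, g_{ℓ+2} = β h_{ℓ-2}, …, g_{2ℓ-1} = β h_1, g_{2ℓ} = β. Then every linear G-code C ⊆ R^n under this listing (i.e., every C with Ψ^{-1}(C) a left ideal of RG) is reversible of index 1: if (c_1, …, c_n) ∈ C then (c_n, …, c_1) ∈ C. In particular, for any v ∈ RG, if C(v) ∩ C(v)^⊥ = {0} then C(v) is a reversible LCD code of index 1. -/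
open MonoidAlgebra Matrix

section Aux

variable {R : Type} [CommRing R] {G : Type} [Group G] {n : ℕ}

lemma psi_add (g : Fin n ≃ G) (x y : MonoidAlgebra R G) :
    Psi g (x + y) = Psi g x + Psi g y := by
  funext i; exact Finsupp.add_apply x.coeff y.coeff (g i)

lemma psi_smul (g : Fin n ≃ G) (r : R) (x : MonoidAlgebra R G) :
    Psi g (r • x) = r • Psi g x := by
  funext i
  show (r • x).coeff (g i) = r * x.coeff (g i)
  rw [MonoidAlgebra.coeff_smul, Finsupp.smul_apply, smul_eq_mul]

/-- `Ψ` as an `R`-linear map. -/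
def PsiLin (g : Fin n ≃ G) : MonoidAlgebra R G →ₗ[R] (Fin n → R) where
  toFun := Psi g
  map_add' := psi_add g
  map_smul' := psi_smul g

lemma psi_injective (g : Fin n ≃ G) : Function.Injective (Psi (R := R) g) := by
  intro x y hxy
  ext a
  have := congrFun hxy (g.symm a)
  simpa [Psi] using this

lemma psi_single_mul (g : Fin n ≃ G) (v : MonoidAlgebra R G) (a : G) (r : R) :
    Psi g (MonoidAlgebra.single a r * v) = r • sigmaMat g v (g.symm a) := by
  classical
  funext j
  simp [Psi, sigmaMat, MonoidAlgebra.single_mul_apply]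

/-- Core lemma: if reversal of the listing corresponds to left translation by `β`,
then every left-ideal code is reversible. -/
lemma leftIdeal_reversible (g : Fin n ≃ G) (β : G)
    (hrev : ∀ i : Fin n, g i.rev = β * g i)
    (C : Submodule R (Fin n → R))
    (hC : IsLeftIdeal (Psi g ⁻¹' (C : Set (Fin n → R))))
    (c : Fin n → R) (hc : c ∈ C) : (fun i => c i.rev) ∈ C := by
  classical
  obtain ⟨I, hI⟩ := hC
  set u : MonoidAlgebra R G :=
    MonoidAlgebra.ofCoeff (Finsupp.equivMapDomain g (Finsupp.equivFunOnFinite.symm c)) with hu_def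
  have hu : ∀ i, u.coeff (g i) = c i := by
    intro i
    simp [hu_def, MonoidAlgebra.coeff_ofCoeff, Finsupp.equivMapDomain_apply]
  have hPsiu : Psi g u = c := funext hu
  have huI : u ∈ I := by
    have hmem : u ∈ Psi g ⁻¹' (C : Set (Fin n → R)) := by
      simp only [Set.mem_preimage, hPsiu, SetLike.mem_coe]
      exact hc
    rw [← hI] at hmem
    exact hmem
  have h2 : MonoidAlgebra.single β⁻¹ (1 : R) * u ∈ I := by
    simpa [smul_eq_mul] using I.smul_mem (MonoidAlgebra.single β⁻¹ (1 : R)) huI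
  have h3 : MonoidAlgebra.single β⁻¹ (1 : R) * u ∈ Psi g ⁻¹' (C : Set (Fin n → R)) := by
    rw [← hI]; exact h2
  have h4 : Psi g (MonoidAlgebra.single β⁻¹ (1 : R) * u) = fun i => c i.rev := by
    funext i
    have : (MonoidAlgebra.single β⁻¹ (1 : R) * u).coeff (g i) = u.coeff (β * g i) := by
      simp [MonoidAlgebra.single_mul_apply]
    simp only [Psi, this, ← hrev i, hu]
  rw [Set.mem_preimage, h4] at h3
  exact h3

/-- The preimage of `C(v)` under `Ψ` is a left ideal. -/
lemma codeOf_leftIdeal (g : Fin n ≃ G) (v : MonoidAlgebra R G) :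
    IsLeftIdeal (Psi g ⁻¹' (codeOf g v : Set (Fin n → R))) := by
  classical
  refine ⟨Submodule.span (MonoidAlgebra R G) {v}, ?_⟩
  have fwd : ∀ w : MonoidAlgebra R G, Psi g (w * v) ∈ codeOf g v := by
    intro w
    induction w using MonoidAlgebra.induction_linear with
    | zero =>
        rw [zero_mul]
        have h0' : Psi (R := R) g 0 = 0 := by funext i; simp [Psi]
        rw [h0']
        exact zero_mem _
    | add f1 f2 h1 h2 => rw [add_mul, psi_add]; exact add_mem h1 h2
    | single a b =>
        rw [psi_single_mul]
        exact Submodule.smul_mem _ b (Submodule.subset_span ⟨g.symm a, rfl⟩)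
  ext x
  simp only [SetLike.mem_coe, Set.mem_preimage]
  constructor
  · intro hx
    obtain ⟨w, hw⟩ := Submodule.mem_span_singleton.mp hx
    rw [smul_eq_mul] at hw
    rw [← hw]
    exact fwd w
  · intro hx
    have hle : codeOf g v ≤ Submodule.map (PsiLin (R := R) g)
        ((Submodule.span (MonoidAlgebra R G) {v}).restrictScalars R) := by
      rw [codeOf]
      apply Submodule.span_le.mpr
      rintro _ ⟨i, rfl⟩
      refine ⟨MonoidAlgebra.single (g i) 1 * v, ?_, ?_⟩
      · exact Submodule.mem_span_singleton.mpr
          ⟨MonoidAlgebra.single (g i) 1, by rw [smul_eq_mul]⟩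
      · show Psi g (MonoidAlgebra.single (g i) 1 * v) = sigmaMat g v i
        rw [psi_single_mul]
        simp
    obtain ⟨y, hy, hxy⟩ := hle hx
    have hyx : y = x := psi_injective g hxy
    rw [← hyx]
    exact hy

/-- The listing satisfies `g (i.rev) = β * g i`. -/
lemma rev_listing {l : ℕ} (hl : 0 < l) (H : Subgroup G)
    (h : Fin l ≃ H) (β : G) (hβinv : β⁻¹ = β) (g : Fin (2 * l) ≃ G)
    (hg1 : ∀ i : Fin (2 * l), ∀ hi : i.val < l, g i = ((h ⟨i.val, hi⟩ : H) : G))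
    (hg2 : ∀ i : Fin (2 * l), ∀ _ : l ≤ i.val,
      g i = β * ((h ⟨2 * l - 1 - i.val, by have := i.isLt; omega⟩ : H) : G))
    (i : Fin (2 * l)) : g i.rev = β * g i := by
  have hββ : β * β = 1 := by nth_rewrite 1 [← hβinv]; simp
  rcases lt_or_ge i.val l with hi | hi
  · have hri : l ≤ (i.rev).val := by rw [Fin.val_rev]; omega
    have hval : 2 * l - 1 - (i.rev).val = i.val := by
      have := Fin.val_rev i; omega
    rw [hg2 i.rev hri, hg1 i hi]
    have heq : (⟨2 * l - 1 - (i.rev).val, by omega⟩ : Fin l) = ⟨i.val, hi⟩ :=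
      Fin.ext hval
    rw [heq]
  · have hri : (i.rev).val < l := by rw [Fin.val_rev]; omega
    have hval : (i.rev).val = 2 * l - 1 - i.val := by
      have := Fin.val_rev i; omega
    rw [hg1 i.rev hri, hg2 i hi, ← mul_assoc, hββ, one_mul]
    have heq : (⟨(i.rev).val, hri⟩ : Fin l) = ⟨2 * l - 1 - i.val, by omega⟩ :=
      Fin.ext hval
    rw [heq]

end Aux

/-- with the listing `e, h₁, …, h_{ℓ-1}, βh_{ℓ-1}, …, βh₁, β` of a group `G`
of order `2ℓ` (where `H` has index 2 and `β ∉ H`, `β⁻¹ = β`), every linear `G`-code is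
reversible of index 1; in particular any LCD `C(v)` is a reversible LCD code of index 1. -/
theorem g_code_reversible (R : Type) [CommRing R] [Fintype R] (G : Type) [Group G]
    [Fintype G] {l : ℕ} (hl : 0 < l) (H : Subgroup G) (hH : H.index = 2)
    (h : Fin l ≃ H) (hfirst : ((h ⟨0, hl⟩ : H) : G) = 1)
    (β : G) (hβ : β ∉ H) (hβinv : β⁻¹ = β)
    (g : Fin (2 * l) ≃ G)
    (hg1 : ∀ i : Fin (2 * l), ∀ hi : i.val < l, g i = ((h ⟨i.val, hi⟩ : H) : G))
    (hg2 : ∀ i : Fin (2 * l), ∀ _ : l ≤ i.val,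
      g i = β * ((h ⟨2 * l - 1 - i.val, by have := i.isLt; omega⟩ : H) : G)) :
    (∀ C : Submodule R (Fin (2 * l) → R),
      IsLeftIdeal (Psi g ⁻¹' (C : Set (Fin (2 * l) → R))) →
        ∀ c ∈ C, (fun i => c i.rev) ∈ C) ∧
    (∀ v : MonoidAlgebra R G,
      codeOf g v ⊓ dualCode (codeOf g v : Set (Fin (2 * l) → R)) = ⊥ →
        ((∀ c ∈ codeOf g v, (fun i => c i.rev) ∈ codeOf g v) ∧
          codeOf g v ⊓ dualCode (codeOf g v : Set (Fin (2 * l) → R)) = ⊥)) := by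
  have hrev : ∀ i : Fin (2 * l), g i.rev = β * g i :=
    rev_listing hl H h β hβinv g hg1 hg2
  constructor
  · intro C hC c hc
    exact leftIdeal_reversible g β hrev C hC c hc
  · intro v hv
    exact ⟨fun c hc => leftIdeal_reversible g β hrev _ (codeOf_leftIdeal g v) c hc, hv⟩
end

section
/- Let R_1 = F_2[u]/(u^2) be the ring of dual numbers over the field F_2 with two elements, and let φ : R_1^n → F_2^{2n} be the coordinatewise extension of the Gray map φ(a + bu) = (b, a + b). Then φ is an F_2-linear bijection, and for every linear code C ⊆ R_1^n one has φ(C^⊥) = φ(C)^⊥, where duals are taken with respect to the standard inner products on R_1^n and F_2^{2n} respectively. -/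
open MonoidAlgebra Matrix

/-- The Gray map `φ₁ : R₁ → 𝔽₂²`, `φ₁(a + bu) = (b, a + b)`. -/
def gray1 (x : DualNumber (ZMod 2)) : Fin 2 → ZMod 2 := ![x.snd, x.fst + x.snd]

/-- The coordinatewise extension `φ : R₁ⁿ → 𝔽₂^{2n}` of the Gray map. -/
def gray (n : ℕ) (c : Fin n → DualNumber (ZMod 2)) : Fin (2 * n) → ZMod 2 :=
  fun k => gray1 (c ⟨k.val / 2, by have := k.isLt; omega⟩) ⟨k.val % 2, by omega⟩

def grayInv (n : ℕ) (z : Fin (2 * n) → ZMod 2) : Fin n → DualNumber (ZMod 2) :=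
  fun i => ⟨z ⟨2 * i.val, by have := i.isLt; omega⟩ + z ⟨2 * i.val + 1, by have := i.isLt; omega⟩,
            z ⟨2 * i.val, by have := i.isLt; omega⟩⟩

lemma gray_even {n : ℕ} (x : Fin n → DualNumber (ZMod 2)) (i : Fin n)
    (h : 2 * i.val < 2 * n) : gray n x ⟨2 * i.val, h⟩ = (x i).snd := by
  have h1 : (2 * i.val) / 2 = i.val := by omega
  have h2 : (2 * i.val) % 2 = 0 := by omega
  simp only [gray]
  have e2 : (⟨(2 * i.val) % 2, by omega⟩ : Fin 2) = 0 := Fin.ext h2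
  rw [e2]
  have e1 : (⟨(2 * i.val) / 2, by omega⟩ : Fin n) = i := Fin.ext h1
  rw [e1]
  rfl

lemma gray_odd {n : ℕ} (x : Fin n → DualNumber (ZMod 2)) (i : Fin n)
    (h : 2 * i.val + 1 < 2 * n) : gray n x ⟨2 * i.val + 1, h⟩ = (x i).fst + (x i).snd := by
  have h1 : (2 * i.val + 1) / 2 = i.val := by omega
  have h2 : (2 * i.val + 1) % 2 = 1 := by omega
  simp only [gray, gray1]
  have : (⟨(2 * i.val + 1) % 2, by omega⟩ : Fin 2) = 1 := Fin.ext h2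
  rw [this]
  have : (⟨(2 * i.val + 1) / 2, by omega⟩ : Fin n) = i := Fin.ext h1
  rw [this]
  rfl

lemma gray_leftInv {n : ℕ} (x : Fin n → DualNumber (ZMod 2)) : grayInv n (gray n x) = x := by
  funext i
  have hi : 2 * i.val < 2 * n := by have := i.isLt; omega
  have hi' : 2 * i.val + 1 < 2 * n := by have := i.isLt; omega
  apply TrivSqZeroExt.ext
  · simp only [grayInv, TrivSqZeroExt.fst_mk, gray_even x i hi, gray_odd x i hi']
    rw [add_comm (x i).fst, ← add_assoc, CharTwo.add_self_eq_zero, zero_add]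
  · simp [grayInv, TrivSqZeroExt.snd_mk, gray_even x i hi]

lemma gray_rightInv {n : ℕ} (z : Fin (2 * n) → ZMod 2) : gray n (grayInv n z) = z := by
  funext k
  have hk := k.isLt
  rcases Nat.mod_two_eq_zero_or_one k.val with h | h
  · have hk2 : k.val / 2 < n := by omega
    have heq : (⟨2 * (k.val / 2), by omega⟩ : Fin (2*n)) = k := Fin.ext (by show 2 * (k.val / 2) = k.val; omega)
    rw [show k = (⟨2 * (k.val / 2), by omega⟩ : Fin (2*n)) from heq.symm,
      gray_even (grayInv n z) ⟨k.val / 2, hk2⟩]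
    simp only [grayInv, TrivSqZeroExt.fst_mk, TrivSqZeroExt.snd_mk]
  · have hk2 : k.val / 2 < n := by omega
    have heq : (⟨2 * (k.val / 2) + 1, by omega⟩ : Fin (2*n)) = k := Fin.ext (by show 2 * (k.val / 2) + 1 = k.val; omega)
    rw [show k = (⟨2 * (k.val / 2) + 1, by omega⟩ : Fin (2*n)) from heq.symm,
      gray_odd (grayInv n z) ⟨k.val / 2, hk2⟩]
    simp only [grayInv, TrivSqZeroExt.fst_mk, TrivSqZeroExt.snd_mk]
    rw [add_right_comm, CharTwo.add_self_eq_zero, zero_add]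

lemma gray1_add (a b : DualNumber (ZMod 2)) : gray1 (a + b) = gray1 a + gray1 b := by
  funext j
  fin_cases j <;>
    simp [gray1, TrivSqZeroExt.fst_add, TrivSqZeroExt.snd_add] <;> ring

lemma gray1_smul (s : ZMod 2) (a : DualNumber (ZMod 2)) : gray1 (s • a) = s • gray1 a := by
  funext j
  fin_cases j <;>
    simp [gray1, TrivSqZeroExt.fst_smul, TrivSqZeroExt.snd_smul, smul_eq_mul] <;> ring

lemma gray_add {n : ℕ} (x y : Fin n → DualNumber (ZMod 2)) :
    gray n (x + y) = gray n x + gray n y := by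
  funext k
  simp only [gray, Pi.add_apply, gray1_add]

lemma gray_smul {n : ℕ} (s : ZMod 2) (x : Fin n → DualNumber (ZMod 2)) :
    gray n (s • x) = s • gray n x := by
  funext k
  simp only [gray, Pi.smul_apply, gray1_smul]

lemma gray_bijective (n : ℕ) : Function.Bijective (gray n) :=
  Function.bijective_iff_has_inverse.2 ⟨grayInv n, gray_leftInv, gray_rightInv⟩

lemma key_id : ∀ a b c d : ZMod 2,
    b * d + (a + b) * (c + d) = a * c + (a * d + c * b) := by decide

def pairFn (n : ℕ) (p : Fin n × Fin 2) : Fin (2 * n) :=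
  ⟨2 * p.1.val + p.2.val, by have := p.1.isLt; have := p.2.isLt; omega⟩

lemma pairFn_bij (n : ℕ) : Function.Bijective (pairFn n) := by
  constructor
  · intro p q h
    have h' : 2 * p.1.val + p.2.val = 2 * q.1.val + q.2.val := congrArg Fin.val h
    have := p.2.isLt; have := q.2.isLt
    ext
    · show p.1.val = q.1.val; omega
    · show p.2.val = q.2.val; omega
  · intro k
    have hk := k.isLt
    refine ⟨(⟨k.val / 2, by omega⟩, ⟨k.val % 2, by omega⟩), ?_⟩
    exact Fin.ext (by show 2 * (k.val / 2) + k.val % 2 = k.val; omega)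

lemma sum_gray {n : ℕ} (x y : Fin n → DualNumber (ZMod 2)) :
    ∑ k, gray n x k * gray n y k
      = (∑ i, x i * y i).fst + (∑ i, x i * y i).snd := by
  rw [TrivSqZeroExt.fst_sum, TrivSqZeroExt.snd_sum, ← Finset.sum_add_distrib]
  rw [← Fintype.sum_bijective (pairFn n) (pairFn_bij n)
    (fun p => gray n x (pairFn n p) * gray n y (pairFn n p))
    (fun k => gray n x k * gray n y k) (fun p => rfl)]
  rw [Fintype.sum_prod_type]
  refine Finset.sum_congr rfl fun i _ => ?_
  rw [Fin.sum_univ_two]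
  have h0 : pairFn n (i, 0) = ⟨2 * i.val, by have := i.isLt; omega⟩ :=
    Fin.ext (by show 2 * i.val + (0 : Fin 2).val = 2 * i.val; simp)
  have h1 : pairFn n (i, 1) = ⟨2 * i.val + 1, by have := i.isLt; omega⟩ :=
    Fin.ext (by show 2 * i.val + (1 : Fin 2).val = 2 * i.val + 1; simp)
  rw [h0, h1, gray_even x i, gray_odd x i, gray_even y i, gray_odd y i,
    TrivSqZeroExt.fst_mul, TrivSqZeroExt.snd_mul]
  simp only [smul_eq_mul, MulOpposite.smul_eq_mul_unop, MulOpposite.unop_op]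
  rw [key_id]
  ring_nf


set_option synthInstance.maxHeartbeats 1000000 in
/-- the Gray map `φ : R₁ⁿ → 𝔽₂^{2n}` is an `𝔽₂`-linear bijection and for
every linear code `C ⊆ R₁ⁿ` one has `φ(C^⊥) = φ(C)^⊥`. -/
theorem gray_linear_bijective_dual (n : ℕ) :
    (∀ x y : Fin n → DualNumber (ZMod 2), gray n (x + y) = gray n x + gray n y) ∧
    (∀ (s : ZMod 2) (x : Fin n → DualNumber (ZMod 2)), gray n (s • x) = s • gray n x) ∧
    Function.Bijective (gray n) ∧
    (∀ C : Submodule (DualNumber (ZMod 2)) (Fin n → DualNumber (ZMod 2)),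
      gray n '' (dualCode (C : Set (Fin n → DualNumber (ZMod 2))) :
          Set (Fin n → DualNumber (ZMod 2))) =
        (dualCode (gray n '' (C : Set (Fin n → DualNumber (ZMod 2)))) :
          Set (Fin (2 * n) → ZMod 2))) := by
  refine ⟨gray_add, gray_smul, gray_bijective n, fun C => ?_⟩
  ext z
  constructor
  · rintro ⟨x, hx, rfl⟩
    rintro w ⟨y, hy, rfl⟩
    rw [sum_gray, hx y hy]
    simp
  · intro hz
    refine ⟨grayInv n z, ?_, gray_rightInv z⟩
    intro y hy
    set x := grayInv n z with hxdef
    have hzx : z = gray n x := (gray_rightInv z).symm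
    have h1 : (∑ i, x i * y i).fst + (∑ i, x i * y i).snd = 0 := by
      rw [← sum_gray, ← hzx]
      exact hz (gray n y) ⟨y, hy, rfl⟩
    have hey : (DualNumber.eps : DualNumber (ZMod 2)) • y ∈ (C : Set (Fin n → DualNumber (ZMod 2))) :=
      C.smul_mem DualNumber.eps hy
    have h2sum : ∑ i, x i * ((DualNumber.eps : DualNumber (ZMod 2)) • y) i
        = (DualNumber.eps : DualNumber (ZMod 2)) * ∑ i, x i * y i := by
      rw [Finset.mul_sum]
      refine Finset.sum_congr rfl fun i _ => ?_
      simp [Pi.smul_apply, smul_eq_mul]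
      ring
    have h2 : ((DualNumber.eps : DualNumber (ZMod 2)) * ∑ i, x i * y i).fst
        + ((DualNumber.eps : DualNumber (ZMod 2)) * ∑ i, x i * y i).snd = 0 := by
      rw [← h2sum, ← sum_gray, ← hzx]
      exact hz (gray n ((DualNumber.eps : DualNumber (ZMod 2)) • y)) ⟨_, hey, rfl⟩
    set S := ∑ i, x i * y i with hS
    have hfst : S.fst = 0 := by
      have e1 : ((DualNumber.eps : DualNumber (ZMod 2)) * S).fst = 0 := by
        simp [TrivSqZeroExt.fst_mul, DualNumber.fst_eps]
      have e2 : ((DualNumber.eps : DualNumber (ZMod 2)) * S).snd = S.fst := by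
        simp [TrivSqZeroExt.snd_mul, DualNumber.fst_eps, DualNumber.snd_eps]
      rw [e1, e2, zero_add] at h2
      exact h2
    have hsnd : S.snd = 0 := by rw [hfst, zero_add] at h1; exact h1
    exact TrivSqZeroExt.ext hfst hsnd
end
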